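/- arXiv:1801.07160 — 2 statements merged into one kernel-verified Lean document; each statement's English description precedes it below -/
import Mathlib

section
/- Let 0 < α < 1, let 0 = t^0 < t^1 < ⋯ < t^N = T be any temporal mesh on [0,T] with steps Δt^n = t^n − t^{n−1} and Δt^max = max_n Δt^n, and let v : [0,T] → ℝ be twice continuously differentiable. Then for every 1 ≤ n ≤ N the L1 remainder satisfies |r^n| ≤ ( (Δt^n)^2/(2(1−α)) + (Δt^max)^2/8 ) (Δt^n)^{−α} · max_{0 ≤ t ≤ t^n} |v''(t)|. -/
/-!
Write rⁿ as the sum of the local errors `∫_{t^{k-1}}^{t^k} (v' - δₖ) w`, where `w s = (tⁿ - s)^(-α)`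
and `δₖ` is the difference quotient of `v` on the `k`-th interval. Away from the singularity,
integration by parts turns the local error into `-∫ w' eₖ`, with `eₖ` the error of linear
interpolation: since `|eₖ| ≤ ‖v''‖ (Δtᵏ)² / 8` and `w' ≥ 0`, these bounds telescope to
`‖v''‖ Δmax² / 8 · w(t^{n-1})`. On the last interval `|v' - δₙ| ≤ ‖v''‖ Δtⁿ / 2` and
`∫ w = (Δtⁿ)^(1-α) / (1-α)`. Both interpolation estimates come from the convexity of
`‖v''‖ x² / 2 ± v`.
-/

open Set MeasureTheory intervalIntegral

section Taylor

variable {f : ℝ → ℝ} {D : Set ℝ} {a b M x y : ℝ}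

lemma convexOn_add_half_mul_sq (hD : Convex ℝ D)
    (hf : Differentiable ℝ f) (hf' : Differentiable ℝ (deriv f))
    (hM : ∀ u ∈ D, -M ≤ deriv (deriv f) u) :
    ConvexOn ℝ D (fun u => f u + M / 2 * u ^ 2) := by
  refine convexOn_of_hasDerivWithinAt2_nonneg hD (f' := fun u => deriv f u + M * u)
    (f'' := fun u => deriv (deriv f) u + M)
    (hf.continuous.add (by fun_prop)).continuousOn (fun u _ => ?_) (fun u _ => ?_)
    (fun u hu => by linarith [hM u (interior_subset hu)])
  · exact (((hf u).hasDerivAt.add ((hasDerivAt_pow 2 u).const_mul (M / 2))).congr_deriv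
      (by ring)).hasDerivWithinAt
  · exact (((hf' u).hasDerivAt.add ((hasDerivAt_id u).const_mul M)).congr_deriv
      (by simp)).hasDerivWithinAt

lemma neg_half_mul_sq_le_taylor_remainder (hD : Convex ℝ D)
    (hf : Differentiable ℝ f) (hf' : Differentiable ℝ (deriv f))
    (hM : ∀ u ∈ D, -M ≤ deriv (deriv f) u) (hx : x ∈ D) (hy : y ∈ D) :
    -(M / 2 * (y - x) ^ 2) ≤ f y - f x - deriv f x * (y - x) := by
  have hconv := convexOn_add_half_mul_sq hD hf hf' hM
  have hderiv : HasDerivAt (fun u => f u + M / 2 * u ^ 2) (deriv f x + M * x) x :=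
    ((hf x).hasDerivAt.add ((hasDerivAt_pow 2 x).const_mul (M / 2))).congr_deriv (by ring)
  rcases lt_trichotomy x y with hxy | rfl | hyx
  · have h := hconv.le_slope_of_hasDerivAt hx hy hxy hderiv
    rw [slope_def_field, le_div_iff₀ (sub_pos.2 hxy)] at h
    nlinarith
  · simp
  · have h := hconv.slope_le_of_hasDerivAt hy hx hyx hderiv
    rw [slope_def_field, div_le_iff₀ (sub_pos.2 hyx)] at h
    nlinarith

lemma abs_taylor_remainder_le (hD : Convex ℝ D)
    (hf : Differentiable ℝ f) (hf' : Differentiable ℝ (deriv f))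
    (hM : ∀ u ∈ D, |deriv (deriv f) u| ≤ M) (hx : x ∈ D) (hy : y ∈ D) :
    |f y - f x - deriv f x * (y - x)| ≤ M / 2 * (y - x) ^ 2 := by
  have hneg : deriv (-f) = -deriv f := funext fun u => deriv.neg
  have hlow := neg_half_mul_sq_le_taylor_remainder hD hf hf'
    (fun u hu => (abs_le.1 (hM u hu)).1) hx hy
  have hup := neg_half_mul_sq_le_taylor_remainder (f := -f) (M := M) hD hf.neg (hneg ▸ hf'.neg)
    (fun u hu => by rw [hneg, deriv.neg]; linarith [(abs_le.1 (hM u hu)).2]) hx hy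
  simp only [hneg, Pi.neg_apply] at hup
  exact abs_le.2 ⟨hlow, by linarith⟩

lemma abs_deriv_sub_slope_le (hf : Differentiable ℝ f) (hf' : Differentiable ℝ (deriv f))
    (hab : a < b) (hM : ∀ u ∈ Icc a b, |deriv (deriv f) u| ≤ M) (hx : x ∈ Icc a b) :
    |deriv f x - (f b - f a) / (b - a)| ≤ M / 2 * (b - a) := by
  have hba : 0 < b - a := sub_pos.2 hab
  have ha := abs_taylor_remainder_le (convex_Icc a b) hf hf' hM hx (left_mem_Icc.2 hab.le)
  have hb := abs_taylor_remainder_le (convex_Icc a b) hf hf' hM hx (right_mem_Icc.2 hab.le)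
  have hdecomp : deriv f x - (f b - f a) / (b - a) =
      ((f a - f x - deriv f x * (a - x)) - (f b - f x - deriv f x * (b - x))) / (b - a) := by
    field_simp
    ring
  rw [hdecomp, abs_div, abs_of_pos hba, div_le_iff₀ hba]
  calc _ ≤ M / 2 * (a - x) ^ 2 + M / 2 * (b - x) ^ 2 := (abs_sub _ _).trans (add_le_add ha hb)
    _ ≤ M / 2 * (b - a) * (b - a) := by
      have hM0 : 0 ≤ M := (abs_nonneg _).trans (hM x hx)
      nlinarith [mul_nonneg hM0 (mul_nonneg (sub_nonneg.2 hx.1) (sub_nonneg.2 hx.2))]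

lemma abs_sub_linear_interpolant_le (hf : Differentiable ℝ f) (hf' : Differentiable ℝ (deriv f))
    (hab : a < b) (hM : ∀ u ∈ Icc a b, |deriv (deriv f) u| ≤ M) (hx : x ∈ Icc a b) :
    |f x - (f a + (f b - f a) / (b - a) * (x - a))| ≤ M / 8 * (b - a) ^ 2 := by
  have hba : 0 < b - a := sub_pos.2 hab
  have hxa : 0 ≤ x - a := sub_nonneg.2 hx.1
  have hbx : 0 ≤ b - x := sub_nonneg.2 hx.2
  have ha := abs_taylor_remainder_le (convex_Icc a b) hf hf' hM hx (left_mem_Icc.2 hab.le)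
  have hb := abs_taylor_remainder_le (convex_Icc a b) hf hf' hM hx (right_mem_Icc.2 hab.le)
  have hdecomp : f x - (f a + (f b - f a) / (b - a) * (x - a)) =
      -((b - x) * (f a - f x - deriv f x * (a - x))
        + (x - a) * (f b - f x - deriv f x * (b - x))) / (b - a) := by
    field_simp
    ring
  rw [hdecomp, abs_div, abs_neg, abs_of_pos hba, div_le_iff₀ hba]
  calc _ ≤ (b - x) * (M / 2 * (a - x) ^ 2) + (x - a) * (M / 2 * (b - x) ^ 2) := by
        refine (abs_add_le _ _).trans (add_le_add ?_ ?_)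
        · rw [abs_mul, abs_of_nonneg hbx]
          exact mul_le_mul_of_nonneg_left ha hbx
        · rw [abs_mul, abs_of_nonneg hxa]
          exact mul_le_mul_of_nonneg_left hb hxa
    _ = M / 2 * ((x - a) * (b - x)) * (b - a) := by ring
    _ ≤ M / 8 * (b - a) ^ 2 * (b - a) := by
      have hM0 : 0 ≤ M := (abs_nonneg _).trans (hM x hx)
      have hamgm : (x - a) * (b - x) ≤ (b - a) ^ 2 / 4 := by nlinarith [sq_nonneg (x - a - (b - x))]
      nlinarith [mul_le_mul_of_nonneg_left hamgm (mul_nonneg hM0 hba.le)]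

end Taylor

/-- The contribution of `[a, b]` to the L1 remainder at the node `c`. -/
noncomputable def l1LocalError (v : ℝ → ℝ) (α c a b : ℝ) : ℝ :=
  (∫ s in a..b, deriv v s * (c - s) ^ (-α)) - (v b - v a) / (b - a) * ∫ s in a..b, (c - s) ^ (-α)

section Kernel

variable {α : ℝ}

lemma intervalIntegrable_sub_rpow_neg (hα : α < 1) (c a b : ℝ) :
    IntervalIntegrable (fun s => (c - s) ^ (-α)) volume a b := by
  simpa using
    ((intervalIntegrable_rpow' (a := c - b) (b := c - a) (by linarith)).comp_sub_left c).symm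

lemma integral_sub_rpow_neg (hα : α < 1) (a c : ℝ) :
    ∫ s in a..c, (c - s) ^ (-α) = (c - a) ^ (1 - α) / (1 - α) := by
  rw [integral_comp_sub_left (fun x => x ^ (-α)) c, integral_rpow (Or.inl (by linarith))]
  norm_num [neg_add_eq_sub, Real.zero_rpow (show 1 - α ≠ 0 by linarith)]

end Kernel

section LocalError

variable {v : ℝ → ℝ} {α c a b M : ℝ}

lemma l1LocalError_eq_integral (hv : Continuous (deriv v))
    (hw : IntervalIntegrable (fun s => (c - s) ^ (-α)) volume a b) :
    l1LocalError v α c a b = ∫ s in a..b, (c - s) ^ (-α) * (deriv v s - (v b - v a) / (b - a)) := by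
  rw [l1LocalError, ← intervalIntegral.integral_const_mul,
    ← integral_sub (hw.continuousOn_mul hv.continuousOn) (hw.const_mul _)]
  exact integral_congr fun s _ => by ring

lemma abs_l1LocalError_le_of_lt (hv : Differentiable ℝ v) (hv' : Differentiable ℝ (deriv v))
    (hα : 0 < α) (hab : a < b) (hbc : b < c) (hM : ∀ u ∈ Icc a b, |deriv (deriv v) u| ≤ M) :
    |l1LocalError v α c a b| ≤ M / 8 * (b - a) ^ 2 * ((c - b) ^ (-α) - (c - a) ^ (-α)) := by
  set δ := (v b - v a) / (b - a)
  set e : ℝ → ℝ := fun s => v s - v a - δ * (s - a)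
  have hpos : ∀ x ∈ uIcc a b, 0 < c - x := fun x hx => by
    rw [uIcc_of_le hab.le] at hx; linarith [hx.2]
  have hw : ∀ x ∈ uIcc a b, HasDerivAt (fun s => (c - s) ^ (-α)) (α * (c - x) ^ (-α - 1)) x :=
    fun x hx => (((hasDerivAt_id x).const_sub c).rpow_const (Or.inl (hpos x hx).ne')).congr_deriv
      (by simp)
  have hw'_cont : ContinuousOn (fun x => α * (c - x) ^ (-α - 1)) (uIcc a b) :=
    continuousOn_const.mul <| (continuousOn_const.sub continuousOn_id).rpow_const
      fun x hx => Or.inl (hpos x hx).ne'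
  have he : ∀ x ∈ uIcc a b, HasDerivAt e (deriv v x - δ) x := fun x _ =>
    (((hv x).hasDerivAt.sub_const (v a)).sub
      (((hasDerivAt_id x).sub_const a).const_mul δ)).congr_deriv (by simp)
  have he_ends : e a = 0 ∧ e b = 0 := by
    refine ⟨by simp [e], ?_⟩
    simp only [e, δ]
    rw [div_mul_cancel₀ _ (sub_pos.2 hab).ne']
    ring
  have hibp : l1LocalError v α c a b = -∫ x in a..b, α * (c - x) ^ (-α - 1) * e x := by
    rw [l1LocalError_eq_integral hv'.continuous ?_,
      integral_mul_deriv_eq_deriv_mul hw he hw'_cont.intervalIntegrable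
        ((hv'.continuous.sub continuous_const).intervalIntegrable _ _), he_ends.1, he_ends.2]
    · ring
    · exact (ContinuousOn.rpow_const (continuousOn_const.sub continuousOn_id)
        fun x hx => Or.inl (hpos x hx).ne').intervalIntegrable
  have hw_increase : ∫ x in a..b, α * (c - x) ^ (-α - 1) = (c - b) ^ (-α) - (c - a) ^ (-α) :=
    integral_eq_sub_of_hasDerivAt hw hw'_cont.intervalIntegrable
  rw [hibp, abs_neg, ← Real.norm_eq_abs, ← hw_increase, ← intervalIntegral.integral_const_mul]
  refine norm_integral_le_of_norm_le hab.le (Filter.Eventually.of_forall fun x hx => ?_)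
    (hw'_cont.intervalIntegrable.const_mul _)
  have hx : x ∈ Icc a b := Ioc_subset_Icc_self hx
  have hw'_nonneg : 0 ≤ α * (c - x) ^ (-α - 1) :=
    mul_nonneg hα.le (Real.rpow_nonneg (hpos x (Icc_subset_uIcc hx)).le _)
  have hex : |e x| ≤ M / 8 * (b - a) ^ 2 := by
    have := abs_sub_linear_interpolant_le hv hv' hab hM hx
    rwa [show v x - (v a + δ * (x - a)) = e x by simp only [e]; ring] at this
  rw [Real.norm_eq_abs, abs_mul, abs_of_nonneg hw'_nonneg, mul_comm]
  exact mul_le_mul_of_nonneg_right hex hw'_nonneg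

lemma abs_l1LocalError_last_le (hv : Differentiable ℝ v) (hv' : Differentiable ℝ (deriv v))
    (hα : α < 1) (hab : a < b) (hM : ∀ u ∈ Icc a b, |deriv (deriv v) u| ≤ M) :
    |l1LocalError v α b a b| ≤ (b - a) ^ 2 / (2 * (1 - α)) * (b - a) ^ (-α) * M := by
  have hba : 0 < b - a := sub_pos.2 hab
  rw [l1LocalError_eq_integral hv'.continuous (intervalIntegrable_sub_rpow_neg hα b a b),
    ← Real.norm_eq_abs]
  calc _ ≤ ∫ s in a..b, M / 2 * (b - a) * (b - s) ^ (-α) := by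
        refine norm_integral_le_of_norm_le hab.le (Filter.Eventually.of_forall fun s hs => ?_)
          ((intervalIntegrable_sub_rpow_neg hα b a b).const_mul _)
        have hs : s ∈ Icc a b := Ioc_subset_Icc_self hs
        have hw_nonneg : 0 ≤ (b - s) ^ (-α) := Real.rpow_nonneg (sub_nonneg.2 hs.2) _
        rw [Real.norm_eq_abs, abs_mul, abs_of_nonneg hw_nonneg, mul_comm]
        exact mul_le_mul_of_nonneg_right (abs_deriv_sub_slope_le hv hv' hab hM hs) hw_nonneg
    _ = M / 2 * (b - a) * ((b - a) * (b - a) ^ (-α) / (1 - α)) := by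
        rw [intervalIntegral.integral_const_mul, integral_sub_rpow_neg hα, sub_eq_add_neg 1 α,
          Real.rpow_add hba, Real.rpow_one]
    _ = _ := by
        field_simp [show 1 - α ≠ 0 by linarith]

end LocalError

lemma sum_abs_l1LocalError_le {v : ℝ → ℝ} {α c M Δ : ℝ} {t : ℕ → ℝ} {m : ℕ}
    (hv : Differentiable ℝ v) (hv' : Differentiable ℝ (deriv v)) (hα : 0 < α)
    (ht : StrictMonoOn t (Iic m)) (hc : t m < c)
    (hM : ∀ u ∈ Icc (t 0) (t m), |deriv (deriv v) u| ≤ M) (hΔ : ∀ k < m, t (k + 1) - t k ≤ Δ) :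
    ∑ k ∈ Finset.range m, |l1LocalError v α c (t k) (t (k + 1))| ≤
      M / 8 * Δ ^ 2 * (c - t m) ^ (-α) := by
  have hfirst : ∀ k ≤ m, t 0 ≤ t k := fun k hk =>
    ht.monotoneOn (mem_Iic.2 m.zero_le) (mem_Iic.2 hk) k.zero_le
  have hlast : ∀ k ≤ m, t k ≤ t m := fun k hk => ht.monotoneOn (mem_Iic.2 hk) (mem_Iic.2 le_rfl) hk
  have hM0 : 0 ≤ M := (abs_nonneg _).trans (hM (t 0) (left_mem_Icc.2 (hfirst m le_rfl)))
  have hlocal : ∀ k < m, |l1LocalError v α c (t k) (t (k + 1))| ≤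
      M / 8 * Δ ^ 2 * ((c - t (k + 1)) ^ (-α) - (c - t k) ^ (-α)) := fun k hk => by
    have hstep : t k < t (k + 1) := ht (mem_Iic.2 hk.le) (mem_Iic.2 hk) k.lt_succ_self
    have hbc : t (k + 1) < c := (hlast _ hk).trans_lt hc
    have hgrowth : 0 ≤ (c - t (k + 1)) ^ (-α) - (c - t k) ^ (-α) :=
      sub_nonneg.2 (Real.rpow_le_rpow_of_nonpos (by linarith) (by linarith) (by linarith))
    refine (abs_l1LocalError_le_of_lt hv hv' hα hstep hbc fun u hu =>
      hM u ⟨(hfirst k hk.le).trans hu.1, hu.2.trans (hlast _ hk)⟩).trans ?_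
    gcongr M / 8 * ?_ * _
    exact pow_le_pow_left₀ (sub_pos.2 hstep).le (hΔ k hk) 2
  calc _ ≤ ∑ k ∈ Finset.range m, M / 8 * Δ ^ 2 * ((c - t (k + 1)) ^ (-α) - (c - t k) ^ (-α)) :=
        Finset.sum_le_sum fun k hk => hlocal k (Finset.mem_range.1 hk)
    _ = M / 8 * Δ ^ 2 * ((c - t m) ^ (-α) - (c - t 0) ^ (-α)) := by
        rw [← Finset.mul_sum, Finset.sum_range_sub fun k => (c - t k) ^ (-α)]
    _ ≤ M / 8 * Δ ^ 2 * (c - t m) ^ (-α) := by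
        have : 0 ≤ (c - t 0) ^ (-α) := Real.rpow_nonneg (by linarith [hfirst m le_rfl]) _
        gcongr
        linarith

lemma integral_sub_sum_eq_sum_l1LocalError {v : ℝ → ℝ} {α : ℝ} (hv : Continuous (deriv v))
    (hα : α < 1) (t : ℕ → ℝ) (n : ℕ) :
    (∫ s in t 0..t n, deriv v s * (t n - s) ^ (-α)) -
        ∑ k ∈ Finset.Icc 1 n, (v (t k) - v (t (k - 1))) / (t k - t (k - 1)) *
          ∫ s in t (k - 1)..t k, (t n - s) ^ (-α) =
      ∑ k ∈ Finset.range n, l1LocalError v α (t n) (t k) (t (k + 1)) := by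
  rw [← sum_integral_adjacent_intervals fun k _ =>
      (intervalIntegrable_sub_rpow_neg hα _ _ _).continuousOn_mul hv.continuousOn,
    show Finset.Icc 1 n = Finset.Ico (0 + 1) (n + 1) from rfl, ← Finset.sum_Ico_add',
    ← Finset.range_eq_Ico, ← Finset.sum_sub_distrib]
  rfl

theorem L1_remainder_bound_general_mesh_general
    (α : ℝ) (hα0 : 0 < α) (hα1 : α < 1)
    (N : ℕ)
    (t : ℕ → ℝ) (h0 : t 0 = 0)
    (hmono : ∀ m, 1 ≤ m → m ≤ N → t (m - 1) < t m)
    (Δmax : ℝ)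
    (hΔmax : IsGreatest {d : ℝ | ∃ m, 1 ≤ m ∧ m ≤ N ∧ d = t m - t (m - 1)} Δmax)
    (v : ℝ → ℝ) (hv : ContDiff ℝ 2 v)
    (n : ℕ) (hn1 : 1 ≤ n) (hnN : n ≤ N)
    (M : ℝ)
    (hM : IsGreatest ((fun s => |deriv (deriv v) s|) '' Set.Icc 0 (t n)) M) :
    |(∫ s in (0:ℝ)..t n, deriv v s * (t n - s) ^ (-α)) -
        ∑ k ∈ Finset.Icc 1 n,
          (v (t k) - v (t (k - 1))) / (t k - t (k - 1)) *
            ∫ s in t (k - 1)..t k, (t n - s) ^ (-α)| ≤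
      ((t n - t (n - 1)) ^ 2 / (2 * (1 - α)) + Δmax ^ 2 / 8) *
        (t n - t (n - 1)) ^ (-α) * M := by
  obtain ⟨m, rfl⟩ : ∃ m, n = m + 1 := ⟨n - 1, by omega⟩
  have hv₁ : Differentiable ℝ v := hv.differentiable two_ne_zero
  have hv₂ : Differentiable ℝ (deriv v) := hv.differentiable_deriv_two
  have ht : StrictMonoOn t (Iic (m + 1)) :=
    strictMonoOn_Iic_of_lt_succ fun k hk => by simpa using hmono (k + 1) (by omega) (by omega)
  have htm : t m < t (m + 1) := ht (mem_Iic.2 m.le_succ) (mem_Iic.2 le_rfl) m.lt_succ_self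
  have ht0m : 0 ≤ t m :=
    h0 ▸ ht.monotoneOn (mem_Iic.2 (m + 1).zero_le) (mem_Iic.2 m.le_succ) m.zero_le
  have hM' : ∀ u ∈ Icc 0 (t (m + 1)), |deriv (deriv v) u| ≤ M := fun u hu => hM.2 ⟨u, hu, rfl⟩
  have hinterior := sum_abs_l1LocalError_le hv₁ hv₂ hα0 (ht.mono (Iic_subset_Iic.2 m.le_succ)) htm
    (fun u hu => hM' u ⟨h0 ▸ hu.1, hu.2.trans htm.le⟩)
    (fun k hk => hΔmax.2 ⟨k + 1, by omega, by omega, by simp⟩)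
  have hlast := abs_l1LocalError_last_le hv₁ hv₂ hα1 htm
    (fun u hu => hM' u ⟨ht0m.trans hu.1, hu.2⟩)
  have hdecomp := integral_sub_sum_eq_sum_l1LocalError hv₂.continuous hα1 t (m + 1)
  rw [h0] at hdecomp
  rw [hdecomp, Finset.sum_range_succ, Nat.add_sub_cancel]
  calc _ ≤ ∑ k ∈ Finset.range m, |l1LocalError v α (t (m + 1)) (t k) (t (k + 1))|
        + |l1LocalError v α (t (m + 1)) (t m) (t (m + 1))| :=
        (abs_add_le _ _).trans (add_le_add_left (Finset.abs_sum_le_sum_abs _ _) _)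
    _ ≤ _ := add_le_add hinterior hlast
    _ = _ := by ring

/-- L1 remainder estimate on an arbitrary temporal mesh: for `0 < α < 1`, a mesh
`0 = t⁰ < t¹ < ⋯ < tᴺ = T` with largest step `Δmax`, and `v` twice continuously
differentiable, the L1 remainder `rⁿ` satisfies
`|rⁿ| ≤ ((Δtⁿ)²/(2(1−α)) + (Δmax)²/8) (Δtⁿ)^(−α) · max_{0≤s≤tⁿ} |v''(s)|`. -/
theorem L1_remainder_bound_general_mesh
    (α T : ℝ) (hα0 : 0 < α) (hα1 : α < 1) (hT : 0 < T)
    (N : ℕ) (hN : 1 ≤ N)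
    (t : ℕ → ℝ) (h0 : t 0 = 0) (hTN : t N = T)
    (hmono : ∀ m, 1 ≤ m → m ≤ N → t (m - 1) < t m)
    (Δmax : ℝ)
    (hΔmax : IsGreatest {d : ℝ | ∃ m, 1 ≤ m ∧ m ≤ N ∧ d = t m - t (m - 1)} Δmax)
    (v : ℝ → ℝ) (hv : ContDiff ℝ 2 v)
    (n : ℕ) (hn1 : 1 ≤ n) (hnN : n ≤ N)
    (M : ℝ)
    (hM : IsGreatest ((fun s => |deriv (deriv v) s|) '' Set.Icc 0 (t n)) M) :
    |(∫ s in (0:ℝ)..t n, deriv v s * (t n - s) ^ (-α)) -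
        ∑ k ∈ Finset.Icc 1 n,
          (v (t k) - v (t (k - 1))) / (t k - t (k - 1)) *
            ∫ s in t (k - 1)..t k, (t n - s) ^ (-α)| ≤
      ((t n - t (n - 1)) ^ 2 / (2 * (1 - α)) + Δmax ^ 2 / 8) *
        (t n - t (n - 1)) ^ (-α) * M :=
  L1_remainder_bound_general_mesh_general α hα0 hα1 N t h0 hmono Δmax hΔmax v hv n hn1 hnN M hM
end

section
/- Let 0 < α < 1 and let 0 = t^0 < t^1 < ⋯ < t^N be any increasing temporal mesh. Then for every 1 ≤ n ≤ N the L1 coefficients are strictly increasing in k: T_{n,k} > T_{n,k−1} for all 2 ≤ k ≤ n. -/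
/-!
`T_{n,k}` is the slope of `s ↦ -(tⁿ - s)^(1-α)` on the mesh cell `[t^{k-1}, t^k]`. Reflecting
`s ↦ tⁿ - s`, it becomes the slope of the strictly concave `x ↦ x^(1-α)` on `[tⁿ - t^k, tⁿ - t^{k-1}]`,
and these cells move left as `k` grows, so the slopes strictly increase.
-/

open Set

/-- The L1 coefficients of a temporal mesh:
`T_{n,k} = ((tⁿ − t^{k−1})^(1−α) − (tⁿ − t^k)^(1−α))/(t^k − t^{k−1})` for `k ≥ 1`,
and `T_{n,0} = 0`. -/
noncomputable def L1Coeff (α : ℝ) (t : ℕ → ℝ) (n k : ℕ) : ℝ :=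
  if k = 0 then 0
  else ((t n - t (k - 1)) ^ (1 - α) - (t n - t k) ^ (1 - α)) / (t k - t (k - 1))

lemma L1Coeff_of_ne_zero {α : ℝ} {t : ℕ → ℝ} {n k : ℕ} (hk : k ≠ 0) :
    L1Coeff α t n k = ((t n - t (k - 1)) ^ (1 - α) - (t n - t k) ^ (1 - α)) / (t k - t (k - 1)) :=
  if_neg hk

lemma strictMonoOn_Iic_of_sub_one_lt {t : ℕ → ℝ} {N : ℕ}
    (hmono : ∀ m, 1 ≤ m → m ≤ N → t (m - 1) < t m) : StrictMonoOn t (Iic N) :=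
  strictMonoOn_Iic_of_lt_succ fun m hm => by
    simpa using hmono (m + 1) (by omega) (Order.succ_le_of_lt hm)

lemma rpow_reflect_slope_lt_slope {p T a b c : ℝ} (hp0 : 0 < p) (hp1 : p < 1)
    (hab : a < b) (hbc : b < c) (hcT : c ≤ T) :
    ((T - a) ^ p - (T - b) ^ p) / (b - a) < ((T - b) ^ p - (T - c) ^ p) / (c - b) := by
  have key := (Real.strictConcaveOn_rpow hp0 hp1).slope_anti_adjacent
    (x := T - c) (y := T - b) (z := T - a) (mem_Ici.2 (by linarith)) (mem_Ici.2 (by linarith))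
    (by linarith) (by linarith)
  have hba : T - a - (T - b) = b - a := by ring
  have hcb : T - b - (T - c) = c - b := by ring
  rwa [hba, hcb] at key

theorem L1Coeff_strictMono_general
    (α : ℝ) (hα0 : 0 < α) (hα1 : α < 1)
    (N : ℕ) (t : ℕ → ℝ)
    (hmono : ∀ m, 1 ≤ m → m ≤ N → t (m - 1) < t m) :
    ∀ n, 1 ≤ n → n ≤ N → ∀ k, 2 ≤ k → k ≤ n →
      L1Coeff α t n (k - 1) < L1Coeff α t n k := by
  intro n _ hnN k hk2 hkn
  have ht := strictMonoOn_Iic_of_sub_one_lt hmono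
  have hkk : k - 1 - 1 = k - 2 := by omega
  rw [L1Coeff_of_ne_zero (by omega), L1Coeff_of_ne_zero (by omega), hkk]
  refine rpow_reflect_slope_lt_slope (by linarith) (by linarith) ?_ ?_ ?_
  · exact ht (mem_Iic.2 (by omega)) (mem_Iic.2 (by omega)) (by omega)
  · exact ht (mem_Iic.2 (by omega)) (mem_Iic.2 (by omega)) (by omega)
  · exact ht.monotoneOn (mem_Iic.2 (by omega)) (mem_Iic.2 hnN) hkn

/-- On any increasing temporal mesh and for `0 < α < 1`, the L1 coefficients are
strictly increasing in `k`: `T_{n,k} > T_{n,k−1}` for `2 ≤ k ≤ n ≤ N`. -/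
theorem L1Coeff_strictMono
    (α : ℝ) (hα0 : 0 < α) (hα1 : α < 1)
    (N : ℕ) (t : ℕ → ℝ) (h0 : t 0 = 0)
    (hmono : ∀ m, 1 ≤ m → m ≤ N → t (m - 1) < t m) :
    ∀ n, 1 ≤ n → n ≤ N → ∀ k, 2 ≤ k → k ≤ n →
      L1Coeff α t n (k - 1) < L1Coeff α t n k :=
  L1Coeff_strictMono_general α hα0 hα1 N t hmono
end
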